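/- Let D be an oriented knot diagram with n ≥ 1 crossings, modeled by a Gauss code g. Then d(D) + d(−D) + 1 ≤ n, where d(D) and d(−D) are the warping degrees of D and of the orientation-reversed diagram −D. -/

import Mathlib

open Polynomial Finset

/-- An oriented knot diagram with `n` crossings, modeled by its oriented Gauss code. -/
structure GaussCode (n : ℕ) where
  g : ZMod (2 * n) → Fin n × Bool
  o : Fin n → ZMod (2 * n)
  u : Fin n → ZMod (2 * n)
  over_iff : ∀ (c : Fin n) (e : ZMod (2 * n)), g e = (c, true) ↔ e = o c
  under_iff : ∀ (c : Fin n) (e : ZMod (2 * n)), g e = (c, false) ↔ e = u c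

namespace GaussCode

variable {n : ℕ}

/-- The warping degree of the base position `e`: the number of crossings whose
under-passage occurs strictly before its over-passage when traversing the diagram
starting at `e`. -/
def d (D : GaussCode n) (e : ZMod (2 * n)) : ℕ :=
  (Finset.univ.filter fun c : Fin n => (D.u c - e).val < (D.o c - e).val).card

/-- The warping crossing polynomial. -/
noncomputable def Xpoly (D : GaussCode n) : Polynomial ℤ :=
  ∑ c : Fin n, Polynomial.X ^ D.d (D.o c)

/-- The warping polynomial. -/
noncomputable def Wpoly (D : GaussCode n) : Polynomial ℤ :=
  ∑ k ∈ Finset.range (2 * n), Polynomial.X ^ D.d (k : ZMod (2 * n))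

/-- The warping degree of the diagram: minimum over all base positions. -/
noncomputable def wdeg (D : GaussCode n) : ℕ :=
  sInf (Set.range fun e : ZMod (2 * n) => D.d e)

/-- The diagram is alternating. -/
def Alternating (D : GaussCode n) : Prop :=
  ∀ e : ZMod (2 * n), (D.g e).2 ≠ (D.g (e + 1)).2

end GaussCode

/-!
Reversing the orientation reverses the order in which the two passages of each crossing are met,
so `d_D(e) + d_{−D}(1 − e) = n` for every base point `e`. Moving the base point across an
under-passage `u c` lowers the warping degree by one, so
`d(D) + d(−D) ≤ d_D(u c + 1) + d_{−D}(1 − u c) = (d_D(u c) − 1) + (n − d_D(u c)) = n − 1`.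
-/

namespace ZMod

variable {m : ℕ} [NeZero m]

theorem val_neg_one_sub (a : ZMod m) : (-1 - a).val = m - 1 - a.val := by
  obtain ⟨k, rfl⟩ := Nat.exists_eq_add_one_of_ne_zero (NeZero.ne m)
  rw [val_sub (by rw [val_neg_one]; exact Nat.le_of_lt_succ a.val_lt), val_neg_one,
    Nat.add_sub_cancel]

theorem val_sub_one_of_ne_zero {a : ZMod m} (ha : a ≠ 0) : (a - 1).val = a.val - 1 := by
  have hpos := val_pos.2 ha
  have hlt := a.val_lt
  rw [val_sub (by rw [val_one_eq_one_mod]; exact (Nat.mod_le _ _).trans hpos),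
    val_one_eq_one_mod, Nat.mod_eq_of_lt (by omega)]

theorem val_le_val_neg_one (a : ZMod m) : a.val ≤ (-1 : ZMod m).val := by
  have := val_neg_one_sub (0 : ZMod m)
  have := a.val_lt
  rw [sub_zero, val_zero] at *
  omega

theorem val_neg_one_sub_lt_val_neg_one_sub_iff {a b : ZMod m} :
    (-1 - a).val < (-1 - b).val ↔ b.val < a.val := by
  have := a.val_lt
  have := b.val_lt
  rw [val_neg_one_sub, val_neg_one_sub]
  omega

theorem val_sub_one_lt_val_sub_one_iff {a b : ZMod m} (ha : a ≠ 0) (hb : b ≠ 0) :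
    (a - 1).val < (b - 1).val ↔ a.val < b.val := by
  have := val_pos.2 ha
  have := val_pos.2 hb
  rw [val_sub_one_of_ne_zero ha, val_sub_one_of_ne_zero hb]
  omega

end ZMod

namespace GaussCode

variable {n : ℕ} (D : GaussCode n)

theorem g_o (c : Fin n) : D.g (D.o c) = (c, true) := (D.over_iff c _).2 rfl

theorem g_u (c : Fin n) : D.g (D.u c) = (c, false) := (D.under_iff c _).2 rfl

theorem o_ne_u (c c' : Fin n) : D.o c ≠ D.u c' := fun h => by
  have := D.g_o c
  rw [h, g_u] at this
  exact Bool.false_ne_true (Prod.mk.inj this).2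

theorem u_injective : Function.Injective D.u := fun c c' h => by
  have := D.g_u c
  rw [h, g_u] at this
  exact (Prod.mk.inj this).1.symm

theorem wdeg_le_d (e : ZMod (2 * n)) : D.wdeg ≤ D.d e := Nat.sInf_le ⟨e, rfl⟩

/-- `Dm` is the Gauss code of `-D`. -/
def IsReverse (Dm D : GaussCode n) : Prop :=
  ∀ e, Dm.g e = D.g (-e)

namespace IsReverse

variable {D} {Dm : GaussCode n}

theorem o_eq (h : Dm.IsReverse D) (c : Fin n) : Dm.o c = -D.o c :=
  ((Dm.over_iff c _).1 (by rw [h, neg_neg, g_o])).symm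

theorem u_eq (h : Dm.IsReverse D) (c : Fin n) : Dm.u c = -D.u c :=
  ((Dm.under_iff c _).1 (by rw [h, neg_neg, g_u])).symm

end IsReverse

variable [NeZero n]

theorem d_add_d_one_sub_of_isReverse {Dm : GaussCode n} (h : Dm.IsReverse D) (e : ZMod (2 * n)) :
    D.d e + Dm.d (1 - e) = n := by
  have hreverse : Dm.d (1 - e) =
      #{c | ¬ (D.u c - e).val < (D.o c - e).val} := by
    refine congrArg card (filter_congr fun c _ => ?_)
    have hne : (D.u c - e).val ≠ (D.o c - e).val :=
      fun hv => D.o_ne_u c c (sub_left_injective (ZMod.val_injective _ hv)).symm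
    rw [h.u_eq, h.o_eq, show -D.u c - (1 - e) = -1 - (D.u c - e) by ring,
      show -D.o c - (1 - e) = -1 - (D.o c - e) by ring,
      ZMod.val_neg_one_sub_lt_val_neg_one_sub_iff]
    omega
  rw [hreverse, d, card_filter_add_card_filter_not, card_univ, Fintype.card_fin]

theorem d_u_add_one_add_one (c₀ : Fin n) : D.d (D.u c₀ + 1) + 1 = D.d (D.u c₀) := by
  have hmem : c₀ ∈ ({c | (D.u c - D.u c₀).val < (D.o c - D.u c₀).val} : Finset (Fin n)) := by
    simpa [ZMod.val_pos, sub_eq_zero] using D.o_ne_u c₀ c₀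
  have herase : ({c | (D.u c - (D.u c₀ + 1)).val < (D.o c - (D.u c₀ + 1)).val} : Finset (Fin n)) =
      ({c | (D.u c - D.u c₀).val < (D.o c - D.u c₀).val} : Finset (Fin n)).erase c₀ := by
    ext c
    simp only [mem_erase, mem_filter, mem_univ, true_and, sub_add_eq_sub_sub]
    by_cases hc : c = c₀
    · -- seen from `u c₀ + 1`, the under-passage of `c₀` is the last position, at offset `-1`
      subst hc
      simpa using ZMod.val_le_val_neg_one _
    · rw [ZMod.val_sub_one_lt_val_sub_one_iff (sub_ne_zero.2 fun h' => hc (D.u_injective h'))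
        (sub_ne_zero.2 (D.o_ne_u c c₀))]
      exact ⟨fun h' => ⟨hc, h'⟩, And.right⟩
  rw [d, d, herase, card_erase_add_one hmem]

end GaussCode

/-- **Theorem (Shimizu).** For a knot diagram `D` with `n ≥ 1` crossings,
`d(D) + d(−D) + 1 ≤ n`. -/
theorem wdeg_add_wdeg_reverse_add_one_le
    (n : ℕ) (hn : 1 ≤ n) (D Dm : GaussCode n)
    (h : ∀ e : ZMod (2 * n), Dm.g e = D.g (-e)) :
    D.wdeg + Dm.wdeg + 1 ≤ n := by
  have : NeZero n := ⟨by omega⟩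
  let c : Fin n := ⟨0, hn⟩
  have hD := D.wdeg_le_d (D.u c + 1)
  have hDm := Dm.wdeg_le_d (1 - D.u c)
  have hstep := D.d_u_add_one_add_one c
  have hsum := D.d_add_d_one_sub_of_isReverse h (D.u c)
  omega
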